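/- arXiv:1706.06146 — 2 statements merged into one kernel-verified Lean document; each statement's English description precedes it below -/
import Mathlib

section
/- For the stick-breaking construction with independent random variables U_k ~ Beta(1-α, θ+kα) (0 ≤ α < 1, θ > -α), the weights V_1 = U_1, V_n = (1-U_1)⋯(1-U_{n-1})U_n for n ≥ 2 are nonnegative and satisfy Σ_{n=1}^∞ V_n = 1 almost surely. -/
/-!
The partial sums of the weights are `1 - ∏_{i<n} (1 - U_i)`, so it suffices that this product,
which decreases in `n`, tends to `0` almost surely. By independence its mean is
`∏_{i<n} (1 - E U_i)` with `E U_i = (1 - α) / (1 + θ + iα) ≥ c / (i + 1)`; divergence of the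
harmonic series sends these means to `0`, and monotone convergence turns convergence of the means
into almost sure convergence.
-/

open MeasureTheory ProbabilityTheory Set Filter Topology

noncomputable def betaMeasure (a b : ℝ) : Measure ℝ :=
  volume.withDensity (fun x => ENNReal.ofReal
    ((Set.Ioo (0:ℝ) 1).indicator
      (fun x => (Real.Gamma (a + b) / (Real.Gamma a * Real.Gamma b)) *
        x ^ (a - 1) * (1 - x) ^ (b - 1)) x))

theorem betaMeasure_eq_probabilityTheory_betaMeasure (a b : ℝ) :
    _root_.betaMeasure a b = ProbabilityTheory.betaMeasure a b := by
  unfold _root_.betaMeasure ProbabilityTheory.betaMeasure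
  congr 1
  funext x
  rw [betaPDF_eq, beta, one_div_div, Set.indicator_apply]
  rfl

namespace ProbabilityTheory

theorem measurable_betaPDF (a b : ℝ) : Measurable (betaPDF a b) :=
  (measurable_betaPDFReal a b).ennreal_ofReal

theorem betaPDFReal_nonneg {a b : ℝ} (ha : 0 < a) (hb : 0 < b) (x : ℝ) :
    0 ≤ betaPDFReal a b x := by
  by_cases hx : 0 < x ∧ x < 1
  · exact (betaPDFReal_pos hx.1 hx.2 ha hb).le
  · rw [betaPDFReal, if_neg hx]

theorem ae_mem_Ioo_betaMeasure (a b : ℝ) : ∀ᵐ x ∂betaMeasure a b, x ∈ Ioo 0 1 := by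
  refine (ae_withDensity_iff (measurable_betaPDF a b)).2 (ae_of_all _ fun x hx => ?_)
  by_contra hmem
  exact hx (by rw [betaPDF_eq, if_neg (show ¬(0 < x ∧ x < 1) from hmem), ENNReal.ofReal_zero])

theorem beta_add_one_left {a b : ℝ} (ha : 0 < a) (hb : 0 < b) :
    beta (a + 1) b = a / (a + b) * beta a b := by
  have hab : 0 < a + b := by linarith
  rw [beta, beta, add_right_comm, Real.Gamma_add_one ha.ne', Real.Gamma_add_one hab.ne']
  have := Real.Gamma_pos_of_pos hab
  field_simp

theorem mul_betaPDFReal {a b : ℝ} (ha : 0 < a) (hb : 0 < b) (x : ℝ) :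
    x * betaPDFReal a b x = a / (a + b) * betaPDFReal (a + 1) b x := by
  unfold betaPDFReal
  split_ifs with hx
  · rw [beta_add_one_left ha hb, add_sub_cancel_right, Real.rpow_sub_one hx.1.ne']
    have := beta_pos ha hb
    have : 0 < a + b := by linarith
    have : 0 < x := hx.1
    field_simp
  · simp

theorem integral_betaMeasure {a b : ℝ} (ha : 0 < a) (hb : 0 < b) (g : ℝ → ℝ) :
    ∫ x, g x ∂betaMeasure a b = ∫ x, betaPDFReal a b x * g x := by
  rw [betaMeasure, integral_withDensity_eq_integral_toReal_smul (measurable_betaPDF a b)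
    (ae_of_all _ fun x => ENNReal.ofReal_lt_top)]
  simp only [betaPDF, ENNReal.toReal_ofReal (betaPDFReal_nonneg ha hb _), smul_eq_mul]

/-- `x` times the `Beta(a, b)` density is `a / (a + b)` times the `Beta(a + 1, b)` density, which
has total mass one. -/
theorem integral_id_betaMeasure {a b : ℝ} (ha : 0 < a) (hb : 0 < b) :
    ∫ x, x ∂betaMeasure a b = a / (a + b) := by
  have ha1 : 0 < a + 1 := by linarith
  have := isProbabilityMeasureBeta ha1 hb
  calc ∫ x, x ∂betaMeasure a b = a / (a + b) * ∫ x, betaPDFReal (a + 1) b x * 1 := by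
        simp_rw [integral_betaMeasure ha hb, mul_comm (betaPDFReal a b _), mul_betaPDFReal ha hb,
          mul_one, integral_const_mul]
    _ = a / (a + b) := by rw [← integral_betaMeasure ha1 hb]; simp

end ProbabilityTheory

theorem Finset.prod_one_sub_mem_Icc {ι : Type*} {u : ι → ℝ} (hu : ∀ i, u i ∈ Set.Icc 0 1)
    (s : Finset ι) : ∏ i ∈ s, (1 - u i) ∈ Set.Icc 0 1 :=
  ⟨Finset.prod_nonneg fun i _ => sub_nonneg.2 (hu i).2,
    Finset.prod_le_one (fun i _ => sub_nonneg.2 (hu i).2) fun i _ => sub_le_self _ (hu i).1⟩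

theorem antitone_prod_range_one_sub {u : ℕ → ℝ} (hu : ∀ i, u i ∈ Icc 0 1) :
    Antitone fun n => ∏ i ∈ Finset.range n, (1 - u i) := by
  refine antitone_nat_of_succ_le fun n => ?_
  rw [Finset.prod_range_succ]
  exact mul_le_of_le_one_right (Finset.prod_one_sub_mem_Icc hu _).1 (sub_le_self _ (hu n).1)

theorem tendsto_prod_range_one_sub_zero {m : ℕ → ℝ} (hm : ∀ i, m i ≤ 1)
    (hsum : Tendsto (fun n => ∑ i ∈ Finset.range n, m i) atTop atTop) :
    Tendsto (fun n => ∏ i ∈ Finset.range n, (1 - m i)) atTop (𝓝 0) := by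
  refine squeeze_zero (fun n => Finset.prod_nonneg fun i _ => sub_nonneg.2 (hm i)) (fun n => ?_)
    (Real.tendsto_exp_atBot.comp (tendsto_neg_atTop_atBot.comp hsum))
  calc ∏ i ∈ Finset.range n, (1 - m i) ≤ ∏ i ∈ Finset.range n, Real.exp (-m i) :=
        Finset.prod_le_prod (fun i _ => sub_nonneg.2 (hm i)) fun i _ => Real.one_sub_le_exp_neg _
    _ = Real.exp (-∑ i ∈ Finset.range n, m i) := by rw [← Finset.sum_neg_distrib, Real.exp_sum]

theorem tendsto_sum_range_div_add_mul_atTop {a b c : ℝ} (ha : 0 < a) (hb : 0 < b) (hc : 0 ≤ c) :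
    Tendsto (fun n => ∑ i ∈ Finset.range n, a / (b + c * i)) atTop atTop := by
  have hbc : 0 < b + c := by linarith
  refine tendsto_atTop_mono (fun n => ?_)
    (Real.tendsto_sum_range_one_div_nat_succ_atTop.const_mul_atTop (div_pos ha hbc))
  rw [Finset.mul_sum]
  refine Finset.sum_le_sum fun i _ => ?_
  have hi : (0 : ℝ) ≤ i := i.cast_nonneg
  rw [div_mul_div_comm, mul_one]
  exact div_le_div_of_nonneg_left ha.le (by positivity) (by nlinarith)

def stickBreakingWeight {R : Type*} [CommRing R] (u : ℕ → R) (n : ℕ) : R :=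
  (∏ i ∈ Finset.range n, (1 - u i)) * u n

theorem sum_range_stickBreakingWeight {R : Type*} [CommRing R] (u : ℕ → R) (N : ℕ) :
    ∑ n ∈ Finset.range N, stickBreakingWeight u n = 1 - ∏ i ∈ Finset.range N, (1 - u i) := by
  induction N with
  | zero => simp
  | succ N ih => rw [Finset.sum_range_succ, ih, Finset.prod_range_succ, stickBreakingWeight]; ring

theorem stickBreakingWeight_nonneg {u : ℕ → ℝ} (hu : ∀ i, u i ∈ Icc 0 1) (n : ℕ) :
    0 ≤ stickBreakingWeight u n :=
  mul_nonneg (Finset.prod_one_sub_mem_Icc hu _).1 (hu n).1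

theorem hasSum_stickBreakingWeight {u : ℕ → ℝ} (hu : ∀ i, u i ∈ Icc 0 1)
    (h : Tendsto (fun N => ∏ i ∈ Finset.range N, (1 - u i)) atTop (𝓝 0)) :
    HasSum (stickBreakingWeight u) 1 := by
  rw [hasSum_iff_tendsto_nat_of_nonneg (stickBreakingWeight_nonneg hu)]
  simpa [sum_range_stickBreakingWeight] using (tendsto_const_nhds (x := (1 : ℝ))).sub h

namespace ProbabilityTheory

variable {Ω : Type*} [MeasurableSpace Ω] {μ : Measure Ω}

theorem iIndepFun.integral_prod_range_one_sub {U : ℕ → Ω → ℝ} (hU : iIndepFun U μ)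
    (hmeas : ∀ i, AEMeasurable (U i) μ) (hint : ∀ i, Integrable (U i) μ) (n : ℕ) :
    ∫ ω, ∏ i ∈ Finset.range n, (1 - U i ω) ∂μ = ∏ i ∈ Finset.range n, (1 - ∫ ω, U i ω ∂μ) := by
  have := hU.isProbabilityMeasure
  have h := (hU.precomp (Fin.val_injective (n := n))).integral_fun_prod_comp
    (f := fun _ x => 1 - x) (fun i => hmeas i) (fun _ => by fun_prop)
  simp only [Finset.prod_range]
  rw [h]
  refine Finset.prod_congr rfl fun i _ => ?_
  rw [integral_sub (integrable_const 1) (hint i), integral_const, probReal_univ, one_smul]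

theorem ae_tendsto_prod_range_one_sub_zero [IsProbabilityMeasure μ] {U : ℕ → Ω → ℝ}
    (hU : iIndepFun U μ) (hmeas : ∀ i, AEMeasurable (U i) μ)
    (hmem : ∀ᵐ ω ∂μ, ∀ i, U i ω ∈ Icc 0 1)
    (hsum : Tendsto (fun n => ∑ i ∈ Finset.range n, ∫ ω, U i ω ∂μ) atTop atTop) :
    ∀ᵐ ω ∂μ, Tendsto (fun n => ∏ i ∈ Finset.range n, (1 - U i ω)) atTop (𝓝 0) := by
  have hint : ∀ i, Integrable (U i) μ := fun i =>
    Integrable.of_bound (hmeas i).aestronglyMeasurable 1 (hmem.mono fun ω h =>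
      abs_le.2 ⟨by linarith [(h i).1], (h i).2⟩)
  have hprod_int : ∀ n, Integrable (fun ω => ∏ i ∈ Finset.range n, (1 - U i ω)) μ := fun n =>
    Integrable.of_bound (Finset.aemeasurable_fun_prod _ fun i _ =>
      aemeasurable_const.sub (hmeas i)).aestronglyMeasurable 1 (hmem.mono fun ω h => by
        have := Finset.prod_one_sub_mem_Icc h (Finset.range n)
        exact abs_le.2 ⟨by linarith [this.1], this.2⟩)
  have hmean_le : ∀ i, ∫ ω, U i ω ∂μ ≤ 1 := fun i => by
    simpa using integral_mono_ae (hint i) (integrable_const 1) (hmem.mono fun ω h => (h i).2)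
  refine tendsto_of_integral_tendsto_of_antitone hprod_int (integrable_zero _ _ μ) ?_
    (hmem.mono fun ω h => antitone_prod_range_one_sub h)
    (hmem.mono fun ω h n => (Finset.prod_one_sub_mem_Icc h _).1)
  simpa only [hU.integral_prod_range_one_sub hmeas hint, Pi.zero_apply, integral_zero] using
    tendsto_prod_range_one_sub_zero hmean_le hsum

end ProbabilityTheory

/-- Stick-breaking: with independent `U k ~ Beta(1-α, θ+(k+1)α)` (so `U 0` plays the
role of `U_1`), the weights `V n = (∏_{i<n}(1-U i)) * U n` are a.s. nonnegative and
sum to 1. -/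
theorem stick_breaking_weights_sum_one
    {Ω : Type*} [MeasurableSpace Ω] (μ : Measure Ω) [IsProbabilityMeasure μ]
    (α θ : ℝ) (hα0 : 0 ≤ α) (hα1 : α < 1) (hθ : -α < θ)
    (U : ℕ → Ω → ℝ) (hmeas : ∀ k, Measurable (U k))
    (hindep : iIndepFun U μ)
    (hlaw : ∀ k : ℕ, Measure.map (U k) μ = _root_.betaMeasure (1 - α) (θ + (k + 1) * α))
    (V : ℕ → Ω → ℝ)
    (hV : ∀ n ω, V n ω = (∏ i ∈ Finset.range n, (1 - U i ω)) * U n ω) :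
    ∀ᵐ ω ∂μ, (∀ n, 0 ≤ V n ω) ∧ HasSum (fun n => V n ω) 1 := by
  have hb_pos : ∀ k : ℕ, 0 < θ + (k + 1) * α := fun k => by nlinarith [k.cast_nonneg (α := ℝ)]
  have hlaw_beta (k : ℕ) : μ.map (U k) = ProbabilityTheory.betaMeasure (1 - α) (θ + (k + 1) * α) :=
    (hlaw k).trans (betaMeasure_eq_probabilityTheory_betaMeasure _ _)
  have hmem : ∀ᵐ ω ∂μ, ∀ k, U k ω ∈ Icc 0 1 := ae_all_iff.2 fun k =>
    (ae_of_ae_map (hmeas k).aemeasurable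
      (by rw [hlaw_beta k]; exact ae_mem_Ioo_betaMeasure _ _)).mono fun ω h => Ioo_subset_Icc_self h
  have hmean (k : ℕ) : ∫ ω, U k ω ∂μ = (1 - α) / ((1 + θ) + α * k) := by
    rw [← integral_map (f := fun x => x) (hmeas k).aemeasurable aestronglyMeasurable_id,
      hlaw_beta k, integral_id_betaMeasure (by linarith) (hb_pos k)]
    ring_nf
  have hprod := ae_tendsto_prod_range_one_sub_zero hindep (fun k => (hmeas k).aemeasurable) hmem
    (by simpa only [hmean] using
      tendsto_sum_range_div_add_mul_atTop (by linarith) (by linarith) hα0)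
  filter_upwards [hmem, hprod] with ω hω hω0
  simp only [hV]
  exact ⟨stickBreakingWeight_nonneg hω, hasSum_stickBreakingWeight hω hω0⟩
end

section
/- Let H be a Hilbert space and (G_β^k) a sequence of resolvents as above with ‖βG_β^k‖ ≤ 1. If G_β^k F converges strongly to some G_β^* F for all F in a dense set and all β in a dense set of (0,∞), and the resolvent equation G_β^* − G_γ^* = (γ−β)G_β^* G_γ^* holds, and lim_{β→∞}(βG_β^* F, F) = ‖F‖² on the dense set, then βG_β^* F → F strongly as β → ∞ for every F ∈ H. -/
open scoped RealInnerProductSpace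
open Filter

/-- Cauchy–Schwarz for a nonnegative self-adjoint operator. -/
lemma pos_op_cauchy_schwarz {H : Type*} [NormedAddCommGroup H] [InnerProductSpace ℝ H]
    (T : H →L[ℝ] H) (hsym : ∀ x y : H, ⟪T x, y⟫ = ⟪x, T y⟫)
    (hpos : ∀ x : H, 0 ≤ ⟪T x, x⟫) (x y : H) :
    ⟪T x, y⟫ ^ 2 ≤ ⟪T x, x⟫ * ⟪T y, y⟫ := by
  have h : ∀ t : ℝ, 0 ≤ ⟪T y, y⟫ * (t * t) + (2 * ⟪T x, y⟫) * t + ⟪T x, x⟫ := by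
    intro t
    have h0 := hpos (x + t • y)
    have hyx : ⟪T y, x⟫ = ⟪T x, y⟫ := by
      rw [hsym y x, real_inner_comm]
    simp only [map_add, map_smul, inner_add_left, inner_add_right, inner_smul_left,
      inner_smul_right, RCLike.star_def, starRingEnd_apply, star_trivial] at h0
    rw [hyx] at h0
    nlinarith [h0]
  have hd := discrim_le_zero h
  rw [discrim] at hd
  nlinarith [hd]

lemma contraction_bound {H : Type*} [NormedAddCommGroup H] [InnerProductSpace ℝ H]
    (T : H →L[ℝ] H) (hsym : ∀ x y : H, ⟪T x, y⟫ = ⟪x, T y⟫)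
    (hpos : ∀ x : H, 0 ≤ ⟪T x, x⟫) (hT : ‖T‖ ≤ 1) (x : H) :
    ‖T x - x‖ ^ 2 ≤ ‖x‖ ^ 2 - ⟪T x, x⟫ := by
  have key : ‖T x‖ ^ 2 ≤ ⟪T x, x⟫ := by
    rcases eq_or_ne (‖T x‖) 0 with h0 | h0
    · rw [h0]; simpa using hpos x
    · have hcs := pos_op_cauchy_schwarz T hsym hpos x (T x)
      have h1 : ⟪T (T x), T x⟫ ≤ ‖T x‖ ^ 2 := by
        calc ⟪T (T x), T x⟫ ≤ ‖T (T x)‖ * ‖T x‖ := real_inner_le_norm _ _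
        _ ≤ (1 * ‖T x‖) * ‖T x‖ := by
            have hb : ‖T (T x)‖ ≤ 1 * ‖T x‖ :=
              (T.le_opNorm (T x)).trans (mul_le_mul_of_nonneg_right hT (norm_nonneg _))
            exact mul_le_mul_of_nonneg_right hb (norm_nonneg _)
        _ = ‖T x‖ ^ 2 := by ring
      have h2 : (‖T x‖ ^ 2) ^ 2 ≤ ⟪T x, x⟫ * ‖T x‖ ^ 2 := by
        rw [← real_inner_self_eq_norm_sq]
        nlinarith [hpos x, hcs, h1, real_inner_self_nonneg (x := T x),
          real_inner_self_eq_norm_sq (T x)]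
      have hpos2 : 0 < ‖T x‖ ^ 2 := by positivity
      nlinarith [h2, hpos2]
  have h3 := norm_sub_sq_real (T x) x
  nlinarith [h3, key, real_inner_comm x (T x)]

/-- If `(G_β^*)_{β>0}` is a family of self-adjoint nonnegative contractions
(`‖βG_β^*‖ ≤ 1`) satisfying the resolvent equation, and
`(βG_β^* F, F) → ‖F‖²` as `β → ∞` for all `F` in a dense subset, then
`βG_β^* F → F` strongly as `β → ∞` for every `F ∈ H`. -/
theorem resolvent_strong_convergence_to_identity
    {H : Type*} [NormedAddCommGroup H] [InnerProductSpace ℝ H] [CompleteSpace H]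
    (G : ℝ → H →L[ℝ] H)
    (hcontr : ∀ β > (0:ℝ), ‖β • G β‖ ≤ 1)
    (hselfadj : ∀ β > (0:ℝ), ∀ x y : H, ⟪G β x, y⟫ = ⟪x, G β y⟫)
    (hnonneg : ∀ β > (0:ℝ), ∀ x : H, 0 ≤ ⟪G β x, x⟫)
    (hres : ∀ β > (0:ℝ), ∀ γ > (0:ℝ),
      G β - G γ = (γ - β) • ((G β).comp (G γ)))
    (D : Set H) (hD : Dense D)
    (hlim : ∀ F ∈ D,
      Tendsto (fun β : ℝ => β * ⟪G β F, F⟫) atTop (nhds (‖F‖ ^ 2))) :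
    ∀ F : H, Tendsto (fun β : ℝ => β • G β F) atTop (nhds F) := by
  have hDconv : ∀ F ∈ D, Tendsto (fun β : ℝ => β • G β F) atTop (nhds F) := by
    intro F hF
    have hb : ∀ᶠ β : ℝ in atTop,
        ‖β • G β F - F‖ ^ 2 ≤ ‖F‖ ^ 2 - β * ⟪G β F, F⟫ := by
      filter_upwards [eventually_gt_atTop (0:ℝ)] with β hβ
      have hsymT : ∀ x y : H, ⟪(β • G β) x, y⟫ = ⟪x, (β • G β) y⟫ := by
        intro x y
        simp only [ContinuousLinearMap.smul_apply, real_inner_smul_left,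
          real_inner_smul_right, hselfadj β hβ x y]
      have hposT : ∀ x : H, 0 ≤ ⟪(β • G β) x, x⟫ := by
        intro x
        simp only [ContinuousLinearMap.smul_apply, real_inner_smul_left]
        exact mul_nonneg hβ.le (hnonneg β hβ x)
      have := contraction_bound (β • G β) hsymT hposT (hcontr β hβ) F
      simpa only [ContinuousLinearMap.smul_apply, real_inner_smul_left] using this
    have h0 : Tendsto (fun β : ℝ => ‖F‖ ^ 2 - β * ⟪G β F, F⟫) atTop (nhds 0) := by
      have := tendsto_const_nhds (x := ‖F‖ ^ 2) (f := atTop (α := ℝ)) |>.sub (hlim F hF)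
      simpa using this
    have hsq : Tendsto (fun β : ℝ => ‖β • G β F - F‖ ^ 2) atTop (nhds 0) :=
      tendsto_of_tendsto_of_tendsto_of_le_of_le' tendsto_const_nhds h0
        (Eventually.of_forall fun β => sq_nonneg _) hb
    have hn : Tendsto (fun β : ℝ => ‖β • G β F - F‖) atTop (nhds 0) := by
      have := (Real.continuous_sqrt.tendsto' 0 0 (by simp)).comp hsq
      have heq : ((fun x => Real.sqrt x) ∘ fun β : ℝ => ‖β • G β F - F‖ ^ 2)
          = fun β : ℝ => ‖β • G β F - F‖ :=
        funext fun β => Real.sqrt_sq (norm_nonneg _)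
      rwa [heq] at this
    exact tendsto_iff_norm_sub_tendsto_zero.mpr hn
  intro F
  rw [Metric.tendsto_atTop]
  intro ε hε
  obtain ⟨F', hF'D, hdist⟩ := hD.exists_dist_lt F (by positivity : (0:ℝ) < ε / 3)
  obtain ⟨N, hN⟩ := Metric.tendsto_atTop.mp (hDconv F' hF'D) (ε / 3) (by positivity)
  refine ⟨max N 1, fun β hβ => ?_⟩
  have hβ1 : (1:ℝ) ≤ β := le_trans (le_max_right _ _) hβ
  have hβ0 : (0:ℝ) < β := lt_of_lt_of_le one_pos hβ1
  have h1 : dist (β • G β F') F' < ε / 3 := hN β (le_trans (le_max_left _ _) hβ)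
  have h2 : ‖β • G β F - β • G β F'‖ ≤ ‖F - F'‖ := by
    have : β • G β F - β • G β F' = (β • G β) (F - F') := by
      simp [map_sub]
    rw [this]
    calc ‖(β • G β) (F - F')‖ ≤ ‖β • G β‖ * ‖F - F'‖ := (β • G β).le_opNorm _
      _ ≤ 1 * ‖F - F'‖ := mul_le_mul_of_nonneg_right (hcontr β hβ0) (norm_nonneg _)
      _ = ‖F - F'‖ := one_mul _
  have htri : dist (β • G β F) F ≤
      ‖β • G β F - β • G β F'‖ + dist (β • G β F') F' + ‖F' - F‖ := by
    rw [dist_eq_norm, dist_eq_norm]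
    calc ‖β • G β F - F‖
        = ‖(β • G β F - β • G β F') + (β • G β F' - F') + (F' - F)‖ := by abel_nf
      _ ≤ ‖(β • G β F - β • G β F') + (β • G β F' - F')‖ + ‖F' - F‖ := norm_add_le _ _
      _ ≤ ‖β • G β F - β • G β F'‖ + ‖β • G β F' - F'‖ + ‖F' - F‖ := by
          linarith [norm_add_le (β • G β F - β • G β F') (β • G β F' - F')]
  have hFF' : ‖F - F'‖ < ε / 3 := by rwa [← dist_eq_norm]
  have hFF'2 : ‖F' - F‖ < ε / 3 := by rwa [norm_sub_rev]
  linarith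
end
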